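/- For all n ≥ 0, the Daehee number of the second kind satisfies Ď_n = B_n^{(n+2)}(2), where B_n^{(α)}(x) is the Bernoulli polynomial of order α. -/

import Mathlib

open PowerSeries Finset

noncomputable def logOneAdd : PowerSeries ℚ :=
  PowerSeries.mk fun k => if k = 0 then 0 else (-1 : ℚ)^(k+1) / k

noncomputable def onePow (x : ℚ) : PowerSeries ℚ :=
  PowerSeries.mk fun k => (∏ i ∈ Finset.range k, (x - (i : ℚ))) / (Nat.factorial k : ℚ)

noncomputable def expX (x : ℚ) : PowerSeries ℚ :=
  PowerSeries.mk fun k => x ^ k / (Nat.factorial k : ℚ)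

/-!
Write `B = t / (eᵗ - 1)`. Then `Ď_n / n!` is the coefficient of `t ^ n` in `e^{2t} B^{n+2}`, and
`eᵗ B = B + t` reduces it to the numbers `a_m = [t^m] eᵗ B^{m+2}`. Differentiating
`B (eᵗ - 1) = t` gives `t B' = B - eᵗ B²`; since the Euler operator `t d/dt` multiplies the
coefficient of `t^k` by `k`, comparing coefficients in `t (B^k)'` and `t (eᵗ B^{m+2})'` yields
`[t^k] eᵗ B^{k+1} = 0` for `k ≥ 1` and `(m + 2) a_{m+1} = -(m + 1) a_m`, hence
`a_m = (-1)^m / (m + 1)`, which matches the coefficients of `(1 + t) log (1 + t)`.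
-/

theorem PowerSeries.coeff_X_mul_derivative {R : Type*} [CommSemiring R] (f : R⟦X⟧) (n : ℕ) :
    coeff n (X * d⁄dX R f) = n * coeff n f := by
  cases n with
  | zero => simp
  | succ n =>
    rw [coeff_succ_X_mul, coeff_derivative, mul_comm]
    push_cast
    rfl

section Identities

variable (A : Type*) [CommRing A] [Algebra ℚ A]

theorem constantCoeff_bernoulliPowerSeries : constantCoeff (bernoulliPowerSeries A) = 1 := by
  simp [bernoulliPowerSeries, ← coeff_zero_eq_constantCoeff_apply]

theorem exp_mul_bernoulliPowerSeries :
    exp A * bernoulliPowerSeries A = bernoulliPowerSeries A + X := by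
  linear_combination bernoulliPowerSeries_mul_exp_sub_one A

theorem exp_sq_mul_bernoulliPowerSeries_pow_succ (k : ℕ) :
    exp A ^ 2 * bernoulliPowerSeries A ^ (k + 1) =
      exp A * bernoulliPowerSeries A ^ (k + 1) + X * (exp A * bernoulliPowerSeries A ^ k) := by
  linear_combination exp A * bernoulliPowerSeries A ^ k * exp_mul_bernoulliPowerSeries A

theorem X_mul_derivative_bernoulliPowerSeries :
    X * d⁄dX A (bernoulliPowerSeries A) =
      bernoulliPowerSeries A - exp A * bernoulliPowerSeries A ^ 2 := by
  have h := congrArg (d⁄dX A) (bernoulliPowerSeries_mul_exp_sub_one A)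
  rw [Derivation.leibniz, map_sub, derivative_exp, derivative_one, derivative_X, sub_zero,
    smul_eq_mul, smul_eq_mul] at h
  linear_combination bernoulliPowerSeries A * h -
    d⁄dX A (bernoulliPowerSeries A) * bernoulliPowerSeries_mul_exp_sub_one A

theorem X_mul_derivative_bernoulliPowerSeries_pow (k : ℕ) :
    X * d⁄dX A (bernoulliPowerSeries A ^ k) =
      (k : A⟦X⟧) * (bernoulliPowerSeries A ^ k - exp A * bernoulliPowerSeries A ^ (k + 1)) := by
  cases k with
  | zero => simp
  | succ k =>
    rw [derivative_pow, Nat.add_sub_cancel]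
    push_cast
    linear_combination (k + 1 : A⟦X⟧) * bernoulliPowerSeries A ^ k *
      X_mul_derivative_bernoulliPowerSeries A

end Identities

section Coefficients

variable (K : Type*) [Field K] [Algebra ℚ K]

theorem coeff_exp_mul_bernoulliPowerSeries_pow_succ_self {k : ℕ} (hk : k ≠ 0) :
    coeff k (exp K * bernoulliPowerSeries K ^ (k + 1)) = 0 := by
  have := algebraRat.charZero K
  have h := congrArg (coeff k) (X_mul_derivative_bernoulliPowerSeries_pow K k)
  rw [coeff_X_mul_derivative, ← map_natCast (C (R := K)), coeff_C_mul, map_sub] at h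
  have hk' : (k : K) ≠ 0 := Nat.cast_ne_zero.mpr hk
  exact (mul_eq_zero.mp (by linear_combination h)).resolve_left hk'

theorem coeff_exp_mul_bernoulliPowerSeries_pow_recurrence (m : ℕ) :
    ((m : K) + 2) * coeff (m + 1) (exp K * bernoulliPowerSeries K ^ (m + 3)) =
      -((m : K) + 1) * coeff m (exp K * bernoulliPowerSeries K ^ (m + 2)) := by
  have euler : X * d⁄dX K (exp K * bernoulliPowerSeries K ^ (m + 2)) =
      X * (exp K * bernoulliPowerSeries K ^ (m + 2)) + ((m + 2 : ℕ) : K⟦X⟧) *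
        (exp K * bernoulliPowerSeries K ^ (m + 2) -
          exp K ^ 2 * bernoulliPowerSeries K ^ (m + 3)) := by
    rw [Derivation.leibniz, derivative_exp, smul_eq_mul, smul_eq_mul]
    linear_combination exp K * X_mul_derivative_bernoulliPowerSeries_pow K (m + 2)
  have h := congrArg (coeff (m + 1)) euler
  rw [coeff_X_mul_derivative, coeff_exp_mul_bernoulliPowerSeries_pow_succ_self K m.succ_ne_zero,
    map_add, coeff_succ_X_mul, ← map_natCast (C (R := K)), coeff_C_mul, map_sub,
    coeff_exp_mul_bernoulliPowerSeries_pow_succ_self K m.succ_ne_zero,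
    exp_sq_mul_bernoulliPowerSeries_pow_succ, map_add, coeff_succ_X_mul] at h
  push_cast at h
  linear_combination h

theorem coeff_exp_mul_bernoulliPowerSeries_pow (m : ℕ) :
    coeff m (exp K * bernoulliPowerSeries K ^ (m + 2)) = (-1) ^ m / (m + 1) := by
  induction m with
  | zero =>
    simp [coeff_zero_eq_constantCoeff_apply, constantCoeff_bernoulliPowerSeries]
  | succ m ih =>
    have := algebraRat.charZero K
    have h := coeff_exp_mul_bernoulliPowerSeries_pow_recurrence K m
    have hm : (m : K) + 1 ≠ 0 := Nat.cast_add_one_ne_zero m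
    rw [ih, neg_mul, mul_div_cancel₀ _ hm] at h
    have hm' : (m : K) + 1 + 1 ≠ 0 := by
      rw [← Nat.cast_succ]
      exact Nat.cast_add_one_ne_zero (m + 1)
    rw [Nat.cast_succ, eq_div_iff hm']
    linear_combination h

theorem eq_bernoulliPowerSeries_pow_mul_of_mul_exp_sub_one_pow_eq {f g : K⟦X⟧} {α : ℕ}
    (h : f * (exp K - 1) ^ α = X ^ α * g) : f = bernoulliPowerSeries K ^ α * g := by
  have hne : exp K - 1 ≠ 0 :=
    right_ne_zero_of_mul (bernoulliPowerSeries_mul_exp_sub_one K ▸ X_ne_zero)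
  refine mul_right_cancel₀ (pow_ne_zero α hne) ?_
  rw [h, ← bernoulliPowerSeries_mul_exp_sub_one, mul_pow]
  ring

end Coefficients

theorem expX_eq_rescale_exp (x : ℚ) : expX x = rescale x (exp ℚ) := by
  ext n
  simp [expX, coeff_rescale, coeff_exp, div_eq_mul_inv]

theorem expX_two : expX 2 = exp ℚ ^ 2 := by
  rw [exp_pow_eq_rescale_exp, expX_eq_rescale_exp, Nat.cast_ofNat]

theorem coeff_exp_sq_mul_bernoulliPowerSeries_pow (n : ℕ) :
    coeff n (exp ℚ ^ 2 * bernoulliPowerSeries ℚ ^ (n + 2)) =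
      coeff (n + 1) ((1 + X) * logOneAdd) := by
  rw [add_mul, one_mul, map_add, coeff_succ_X_mul]
  cases n with
  | zero =>
    simp [logOneAdd, coeff_zero_eq_constantCoeff_apply, constantCoeff_bernoulliPowerSeries]
  | succ m =>
    rw [exp_sq_mul_bernoulliPowerSeries_pow_succ, map_add, coeff_succ_X_mul,
      show m + 2 + 1 = m + 1 + 2 by ring, coeff_exp_mul_bernoulliPowerSeries_pow,
      coeff_exp_mul_bernoulliPowerSeries_pow]
    simp only [logOneAdd, coeff_mk, Nat.succ_ne_zero, if_false]
    push_cast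
    ring

theorem daehee2_eq_higher_bernoulli (Dh : ℕ → ℚ) (OB : ℕ → ℚ → ℕ → ℚ)
    (hDh : PowerSeries.mk (fun n => Dh n / (Nat.factorial n : ℚ)) * PowerSeries.X = (1 + PowerSeries.X) * logOneAdd) (hOB : ∀ (α : ℕ) (x : ℚ), PowerSeries.mk (fun n => OB α x n / (Nat.factorial n : ℚ)) * (PowerSeries.exp ℚ - 1) ^ α = PowerSeries.X ^ α * expX x) :
    ∀ n : ℕ, Dh n = OB (n + 2) 2 n := by
  intro n
  have hDh_coeff : Dh n / n.factorial = coeff (n + 1) ((1 + X) * logOneAdd) := by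
    simpa using congrArg (coeff (n + 1)) hDh
  have hOB_series : PowerSeries.mk (fun k => OB (n + 2) 2 k / k.factorial) =
      exp ℚ ^ 2 * bernoulliPowerSeries ℚ ^ (n + 2) := by
    rw [mul_comm, ← expX_two]
    exact eq_bernoulliPowerSeries_pow_mul_of_mul_exp_sub_one_pow_eq ℚ (hOB (n + 2) 2)
  have hOB_coeff : OB (n + 2) 2 n / n.factorial = coeff (n + 1) ((1 + X) * logOneAdd) := by
    rw [← coeff_exp_sq_mul_bernoulliPowerSeries_pow, ← hOB_series, coeff_mk]
  exact (div_left_inj' (Nat.cast_ne_zero.mpr n.factorial_ne_zero)).mp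
    (hDh_coeff.trans hOB_coeff.symm)
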